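/- arXiv:2102.01136 — 2 statements merged into one kernel-verified Lean document; each statement's English description precedes it below -/
import Mathlib

section
/- Let d ≥ 1, α ∈ (1,2), γ₀ > 0, R₀ ∈ (0,1], and let a ∈ L_{1,loc}(ℝ^{d+1}) satisfy: for every (t₀,x₀) ∈ ℝ^{d+1} and every 0 < ρ ≤ R₀, ⨍_{Q_ρ(t₀,x₀)} |a − (a)_{Q_ρ(t₀,x₀)}| ≤ γ₀, where Q_ρ(t,x) = (t − ρ^{2/α}, t) × B_ρ(x) and (a)_Q denotes the average of a over Q. Then there is a constant N = N(α,d) such that for every (t₀,x₀) ∈ ℝ^{d+1}, every r with 0 < r ≤ 2^{−α/2}R₀, and every h ≥ r^{2/α}, one has ⨍_{t₀−h}^{t₀} ⨍_{B_r(x₀)} |a − ā| dx dt ≤ N·h·r^{−2/α}·γ₀, where ā = ⨍_{Q_r(t₀,x₀)} a. -/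
open MeasureTheory Real
open scoped ENNReal

noncomputable section

abbrev Esp (d : ℕ) := EuclideanSpace ℝ (Fin d)

/-- Parabolic cylinder `Q_r(t,x) = (t - r^{2/α}, t) × B_r(x)`. -/
def pCyl (d : ℕ) (α r t : ℝ) (x : Esp d) : Set (ℝ × Esp d) :=
  Set.Ioo (t - r ^ (2 / α)) t ×ˢ Metric.ball x r

/-- Small mean oscillation assumption with parameters `(γ, R)`. -/
def SMO (d : ℕ) (α γ R : ℝ) (a : Fin d → Fin d → ℝ → Esp d → ℝ) : Prop :=
  ∀ (i j : Fin d) (t₀ : ℝ) (x₀ : Esp d) (r : ℝ), 0 < r → r ≤ R →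
    ⨍ z in pCyl d α r t₀ x₀,
      |a i j z.1 z.2 - ⨍ z' in pCyl d α r t₀ x₀, a i j z'.1 z'.2| ≤ γ

/-- Ellipticity/boundedness assumption with constant `δ`. -/
def Elliptic (d : ℕ) (δ : ℝ) (a : Fin d → Fin d → ℝ → Esp d → ℝ)
    (b : Fin d → ℝ → Esp d → ℝ) (c : ℝ → Esp d → ℝ) : Prop :=
  ∀ (t : ℝ) (x : Esp d),
    (∀ ξ : Fin d → ℝ, δ * ∑ i, ξ i ^ 2 ≤ ∑ i, ∑ j, a i j t x * ξ i * ξ j) ∧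
    (∀ i j, |a i j t x| ≤ δ⁻¹) ∧ (∀ i, |b i t x| ≤ δ⁻¹) ∧ |c t x| ≤ δ⁻¹

/-- `A_p` weight on `ℝ` with constant at most `K`. -/
def ApReal (p K : ℝ) (w : ℝ → ℝ) : Prop :=
  (∀ t, 0 ≤ w t) ∧
  ∀ (t₀ r : ℝ), 0 < r →
    (⨍ t in Metric.ball t₀ r, w t) *
      (⨍ t in Metric.ball t₀ r, w t ^ (-1 / (p - 1))) ^ (p - 1) ≤ K

/-- `A_q` weight on a domain `D ⊆ ℝ^d` with constant at most `K`. -/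
def AqDom (d : ℕ) (q K : ℝ) (D : Set (Esp d)) (w : Esp d → ℝ) : Prop :=
  (∀ x, 0 ≤ w x) ∧
  ∀ x₀ ∈ D, ∀ r : ℝ, 0 < r →
    (⨍ x in Metric.ball x₀ r ∩ D, w x) *
      (⨍ x in Metric.ball x₀ r ∩ D, w x ^ (-1 / (q - 1))) ^ (q - 1) ≤ K

/-- Weighted mixed norm `‖f‖_{L_{p,q,w}((0,T)×D)}`. -/
def mixedNormE (d : ℕ) (p q T : ℝ) (D : Set (Esp d)) (w₁ : ℝ → ℝ) (w₂ : Esp d → ℝ)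
    (f : ℝ → Esp d → ℝ) : ℝ≥0∞ :=
  (∫⁻ t in Set.Ioo (0 : ℝ) T,
      (∫⁻ x in D, ENNReal.ofReal (|f t x| ^ q * w₂ x)) ^ (p / q) *
        ENNReal.ofReal (w₁ t)) ^ (1 / p)

/-- Caputo fractional derivative of order `α ∈ (1,2)` (zero initial data). -/
def caputo (d : ℕ) (α : ℝ) (u : ℝ → Esp d → ℝ) (t : ℝ) (x : Esp d) : ℝ :=
  (Real.Gamma (2 - α))⁻¹ *
    ∫ s in Set.Ioo (0 : ℝ) t, (t - s) ^ (1 - α) * deriv (deriv (fun τ => u τ x)) s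

/-- First spatial partial derivative `D_i u`. -/
def Dp (d : ℕ) (i : Fin d) (u : ℝ → Esp d → ℝ) (t : ℝ) (x : Esp d) : ℝ :=
  fderiv ℝ (u t) x (EuclideanSpace.single i 1)

/-- Second spatial partial derivative `D_{ij} u`. -/
def Dpp (d : ℕ) (i j : Fin d) (u : ℝ → Esp d → ℝ) (t : ℝ) (x : Esp d) : ℝ :=
  fderiv ℝ (fun y => fderiv ℝ (u t) y (EuclideanSpace.single j 1)) x
    (EuclideanSpace.single i 1)

/-- `|Du|`. -/
def gradNorm (d : ℕ) (u : ℝ → Esp d → ℝ) (t : ℝ) (x : Esp d) : ℝ :=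
  ‖fderiv ℝ (u t) x‖

/-- `|D²u|`. -/
def hessNorm (d : ℕ) (u : ℝ → Esp d → ℝ) (t : ℝ) (x : Esp d) : ℝ :=
  ‖iteratedFDeriv ℝ 2 (u t) x‖

/-- `u ∈ C^∞([0,T] × D̄)`, vanishing for large `|x|`, with zero initial conditions. -/
def SmoothZeroInit (d : ℕ) (T : ℝ) (D : Set (Esp d)) (u : ℝ → Esp d → ℝ) : Prop :=
  ContDiffOn ℝ (⊤ : ℕ∞) (fun z : ℝ × Esp d => u z.1 z.2) (Set.Icc 0 T ×ˢ closure D) ∧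
  (∃ R : ℝ, ∀ t x, R ≤ ‖x‖ → u t x = 0) ∧
  (∀ x, u 0 x = 0) ∧ (∀ x, derivWithin (fun s => u s x) (Set.Ici 0) 0 = 0)

/-! Comparing both `Q_r(s)` and `Q_r(s - r^{2/α})` with the cylinder `Q_{2^{α/2} r}(s)` of twice
the height, whose volume is at most `2^{d+1}` times theirs, shows that the averages of `a` over
consecutive cylinders of radius `r` differ by at most `2^{d+2} γ`. Covering `(t₀ - h, t₀) × B_r(x₀)`
by `n = ⌈h / r^{2/α}⌉` such cylinders stacked below `t₀`, the `k`-th one contributes at most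
`(1 + k 2^{d+2}) γ |Q_r|` to the integral of `|a - ā|`; dividing the sum by `h |B_r|` gives a bound
linear in `h / r^{2/α}`. -/

open Set Metric
open scoped Function

theorem abs_setAverage_sub_le_of_subset {X : Type*} [MeasurableSpace X] {μ : Measure X}
    {f : X → ℝ} {S S' : Set X} (hSS' : S ⊆ S') (hS : μ S ≠ 0) (hS' : μ S' ≠ ∞)
    (hf : IntegrableOn f S' μ) (c : ℝ) :
    |⨍ x in S, f x ∂μ - c| ≤ μ.real S' / μ.real S * ⨍ x in S', |f x - c| ∂μ := by
  have hSfin : μ S ≠ ∞ := ne_top_of_le_ne_top hS' (measure_mono hSS')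
  have hS_pos : 0 < μ.real S := ENNReal.toReal_pos hS hSfin
  have hfc : IntegrableOn (fun x => f x - c) S' μ := hf.sub (integrableOn_const hS')
  have hshift : ⨍ x in S, f x ∂μ - c = ⨍ x in S, (f x - c) ∂μ := by
    rw [setAverage_eq, setAverage_eq, integral_sub (hf.mono_set hSS') (integrableOn_const hSfin),
      setIntegral_const, smul_sub, smul_eq_mul, smul_eq_mul, smul_eq_mul,
      inv_mul_cancel_left₀ hS_pos.ne']
  calc |⨍ x in S, f x ∂μ - c|
      ≤ (μ.real S)⁻¹ * ∫ x in S, |f x - c| ∂μ := by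
        rw [hshift, setAverage_eq, smul_eq_mul, abs_mul, abs_of_pos (inv_pos.2 hS_pos)]
        gcongr
        exact abs_integral_le_integral_abs
    _ ≤ (μ.real S)⁻¹ * ∫ x in S', |f x - c| ∂μ :=
        mul_le_mul_of_nonneg_left (setIntegral_mono_set hfc.abs
          (.of_forall fun _ => abs_nonneg _) hSS'.eventuallyLE) (inv_nonneg.2 hS_pos.le)
    _ = μ.real S' / μ.real S * ⨍ x in S', |f x - c| ∂μ := by
        rw [← measure_smul_setAverage _ hS', smul_eq_mul]
        ring

theorem setIntegral_abs_sub_le_add {X : Type*} [MeasurableSpace X] {μ : Measure X}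
    {f : X → ℝ} {S : Set X} (hS : μ S ≠ ∞) (hf : IntegrableOn f S μ) (c c' : ℝ) :
    ∫ x in S, |f x - c| ∂μ ≤ ∫ x in S, |f x - c'| ∂μ + μ.real S * |c' - c| := by
  have hf' : IntegrableOn (fun x => |f x - c'|) S μ := (hf.sub (integrableOn_const hS)).abs
  calc ∫ x in S, |f x - c| ∂μ ≤ ∫ x in S, (|f x - c'| + |c' - c|) ∂μ :=
        integral_mono (hf.sub (integrableOn_const hS)).abs (hf'.add (integrableOn_const hS))
          fun x => abs_sub_le _ _ _
    _ = ∫ x in S, |f x - c'| ∂μ + μ.real S * |c' - c| := by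
        rw [integral_add hf' (integrableOn_const hS), setIntegral_const, smul_eq_mul]

theorem measureReal_ball_le_two_pow_finrank_mul {E : Type*} [NormedAddCommGroup E]
    [NormedSpace ℝ E] [MeasurableSpace E] [BorelSpace E] [FiniteDimensional ℝ E]
    (μ : Measure E) [μ.IsAddHaarMeasure] (x : E) {ρ ρ' : ℝ} (hρ' : ρ' ≤ 2 * ρ) :
    μ.real (ball x ρ') ≤ 2 ^ Module.finrank ℝ E * μ.real (ball x ρ) := by
  have h2 : μ (ball x (2 * ρ)) = ENNReal.ofReal (2 ^ Module.finrank ℝ E) * μ (ball x ρ) := by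
    rw [Measure.addHaar_ball_mul_of_pos μ x two_pos, Measure.addHaar_ball_center μ x]
  calc μ.real (ball x ρ') ≤ μ.real (ball x (2 * ρ)) :=
        measureReal_mono (ball_subset_ball hρ') measure_ball_lt_top.ne
    _ = 2 ^ Module.finrank ℝ E * μ.real (ball x ρ) := by
        rw [measureReal_def, h2, ENNReal.toReal_mul, ENNReal.toReal_ofReal (by positivity),
          measureReal_def]

theorem restrict_Ioc_prod_eq_restrict_Ioo_prod {E : Type*} [MeasurableSpace E] (ν : Measure E)
    [SFinite ν] (u v : ℝ) (B : Set E) :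
    (volume.prod ν).restrict (Ioc u v ×ˢ B) = (volume.prod ν).restrict (Ioo u v ×ˢ B) := by
  rw [← Measure.prod_restrict, ← Measure.prod_restrict, Measure.restrict_congr_set Ioo_ae_eq_Ioc]

theorem Ioo_subset_biUnion_Ioc {t h τ : ℝ} (hτ : 0 < τ) {n : ℕ} (hn : h ≤ n * τ) :
    Ioo (t - h) t ⊆ ⋃ k ∈ Finset.range n, Ioc (t - k * τ - τ) (t - k * τ) := by
  intro u ⟨hu₁, hu₂⟩
  have hq : 0 ≤ (t - u) / τ := div_nonneg (by linarith) hτ.le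
  set k := ⌊(t - u) / τ⌋₊
  have hk₁ : (k : ℝ) * τ ≤ t - u := (le_div_iff₀ hτ).1 (Nat.floor_le hq)
  have hk₂ : t - u < (k + 1) * τ := (div_lt_iff₀ hτ).1 (Nat.lt_floor_add_one _)
  have hkn : k < n := Nat.floor_lt hq |>.2 ((div_lt_iff₀ hτ).2 (by linarith))
  exact mem_biUnion (Finset.mem_range.2 hkn) ⟨by linarith, by linarith⟩

theorem setIntegral_Ioo_prod_le_sum {E : Type*} [MeasurableSpace E] {ν : Measure E} [SFinite ν]
    {g : ℝ × E → ℝ} (hg₀ : 0 ≤ g) {B : Set E} (hB : MeasurableSet B)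
    (hg : ∀ u v, IntegrableOn g (Ioc u v ×ˢ B) (volume.prod ν)) {t h τ : ℝ} (hτ : 0 < τ) {n : ℕ}
    (hn : h ≤ n * τ) :
    ∫ z in Ioo (t - h) t ×ˢ B, g z ∂(volume.prod ν)
      ≤ ∑ k ∈ Finset.range n,
          ∫ z in Ioo (t - k * τ - τ) (t - k * τ) ×ˢ B, g z ∂(volume.prod ν) := by
  have hdisj : Pairwise (Disjoint on fun k : ℕ => Ioc (t - k * τ - τ) (t - k * τ) ×ˢ B) := by
    have hanti : Antitone fun k : ℕ => t - k * τ := fun i j hij => by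
      have : (i : ℝ) ≤ j := by exact_mod_cast hij
      nlinarith
    refine hanti.pairwise_disjoint_on_Ioc_succ.mono fun i j hij => ?_
    simpa [Nat.succ_eq_add_one, add_mul, sub_sub] using hij.set_prod_left B B
  calc ∫ z in Ioo (t - h) t ×ˢ B, g z ∂(volume.prod ν)
      ≤ ∫ z in ⋃ k ∈ Finset.range n, Ioc (t - k * τ - τ) (t - k * τ) ×ˢ B,
          g z ∂(volume.prod ν) := by
        refine setIntegral_mono_set (integrableOn_finset_iUnion.2 fun _ _ => hg _ _)
          (.of_forall fun z => hg₀ z) (LE.le.eventuallyLE ?_)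
        rw [← iUnion₂_prod_const]
        exact prod_mono (Ioo_subset_biUnion_Ioc hτ hn) subset_rfl
    _ = ∑ k ∈ Finset.range n,
          ∫ z in Ioc (t - k * τ - τ) (t - k * τ) ×ˢ B, g z ∂(volume.prod ν) :=
        integral_biUnion_finset _ (fun _ _ => measurableSet_Ioc.prod hB)
          (hdisj.set_pairwise _) fun _ _ => hg _ _
    _ = _ := by simp only [restrict_Ioc_prod_eq_restrict_Ioo_prod]

theorem MeasureTheory.LocallyIntegrable.integrableOn_of_isBounded {X : Type*}
    [PseudoMetricSpace X] [ProperSpace X] [MeasurableSpace X] {μ : Measure X} {f : X → ℝ}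
    (hf : LocallyIntegrable f μ) {S : Set X} (hS : Bornology.IsBounded S) : IntegrableOn f S μ :=
  (hf.integrableOn_isCompact hS.isCompact_closure).mono_set subset_closure

theorem le_two_rpow_mul {α r : ℝ} (hα : 0 ≤ α) (hr : 0 ≤ r) : r ≤ 2 ^ (α / 2) * r :=
  le_mul_of_one_le_left hr (one_le_rpow one_le_two (by linarith))

def cylAvg (d : ℕ) (α : ℝ) (a : ℝ × Esp d → ℝ) (ρ t : ℝ) (x : Esp d) : ℝ :=
  ⨍ z in pCyl d α ρ t x, a z

def HasSmallMeanOsc (d : ℕ) (α γ R : ℝ) (a : ℝ × Esp d → ℝ) : Prop :=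
  ∀ (t : ℝ) (x : Esp d) (ρ : ℝ), 0 < ρ → ρ ≤ R →
    ⨍ z in pCyl d α ρ t x, |a z - cylAvg d α a ρ t x| ≤ γ

section Cylinders

variable {d : ℕ} {α : ℝ}

theorem measureReal_Ioo_prod_ball {u v : ℝ} (huv : u ≤ v) (x : Esp d) (ρ : ℝ) :
    volume.real (Ioo u v ×ˢ ball x ρ) = (v - u) * volume.real (ball x ρ) := by
  rw [Measure.volume_eq_prod, measureReal_prod_prod, Real.volume_real_Ioo_of_le huv]

theorem measureReal_pCyl {ρ : ℝ} (hρ : 0 ≤ ρ) (t : ℝ) (x : Esp d) :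
    volume.real (pCyl d α ρ t x) = ρ ^ (2 / α) * volume.real (ball x ρ) := by
  rw [pCyl, measureReal_Ioo_prod_ball (by linarith [rpow_nonneg hρ (2 / α)]), sub_sub_cancel]

theorem isBounded_pCyl (ρ t : ℝ) (x : Esp d) : Bornology.IsBounded (pCyl d α ρ t x) :=
  isBounded_Ioo _ _ |>.prod isBounded_ball

theorem measure_pCyl_ne_zero {ρ : ℝ} (hρ : 0 < ρ) (t : ℝ) (x : Esp d) :
    volume (pCyl d α ρ t x) ≠ 0 := by
  rw [pCyl, Measure.volume_eq_prod, Measure.prod_prod, Real.volume_Ioo, sub_sub_cancel]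
  exact mul_ne_zero (ENNReal.ofReal_pos.2 (rpow_pos_of_pos hρ _)).ne'
    (measure_ball_pos volume x hρ).ne'

theorem pCyl_subset_pCyl {ρ ρ' t t' : ℝ} (x : Esp d) (hρ : ρ ≤ ρ') (ht : t ≤ t')
    (hbot : t' - ρ' ^ (2 / α) ≤ t - ρ ^ (2 / α)) : pCyl d α ρ t x ⊆ pCyl d α ρ' t' x :=
  prod_mono (Ioo_subset_Ioo hbot ht) (ball_subset_ball hρ)

end Cylinders

section SmallMeanOsc

variable {d : ℕ} {α γ R : ℝ} {a : ℝ × Esp d → ℝ}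

theorem abs_cylAvg_sub_cylAvg_le_of_subset (ha : LocallyIntegrable a volume)
    (hosc : HasSmallMeanOsc d α γ R a) {ρ ρ' t t' : ℝ} {x : Esp d} (hρ : 0 < ρ) (hρ' : 0 < ρ')
    (hρ'R : ρ' ≤ R) (hsub : pCyl d α ρ t x ⊆ pCyl d α ρ' t' x) :
    |cylAvg d α a ρ t x - cylAvg d α a ρ' t' x|
      ≤ volume.real (pCyl d α ρ' t' x) / volume.real (pCyl d α ρ t x) * γ :=
  (abs_setAverage_sub_le_of_subset hsub (measure_pCyl_ne_zero hρ t x)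
    (isBounded_pCyl ρ' t' x).measure_lt_top.ne
    (ha.integrableOn_of_isBounded (isBounded_pCyl ρ' t' x)) _).trans
    (mul_le_mul_of_nonneg_left (hosc t' x ρ' hρ' hρ'R) (by positivity))

theorem abs_cylAvg_sub_cylAvg_prev_le (ha : LocallyIntegrable a volume)
    (hosc : HasSmallMeanOsc d α γ R a) (hγ : 0 ≤ γ) (hα : α ∈ Ioc 0 2) {r : ℝ} (hr : 0 < r)
    (hrR : 2 ^ (α / 2) * r ≤ R) (t : ℝ) (x : Esp d) :
    |cylAvg d α a r (t - r ^ (2 / α)) x - cylAvg d α a r t x| ≤ 2 ^ (d + 2) * γ := by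
  set r' := 2 ^ (α / 2) * r
  have hrr' : r ≤ r' := le_two_rpow_mul hα.1.le hr.le
  have hr'2 : r' ≤ 2 * r := by
    refine mul_le_mul_of_nonneg_right ?_ hr.le
    simpa using rpow_le_rpow_of_exponent_le one_le_two (by linarith [hα.2] : α / 2 ≤ 1)
  have hτ' : r' ^ (2 / α) = 2 * r ^ (2 / α) := by
    have : α / 2 * (2 / α) = 1 := by field_simp [hα.1.ne']
    rw [mul_rpow (by positivity) hr.le, ← rpow_mul zero_le_two, this, rpow_one]
  have hratio : ∀ s,
      volume.real (pCyl d α r' t x) / volume.real (pCyl d α r s x) ≤ 2 ^ (d + 1) := by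
    intro s
    have hball := measureReal_ball_le_two_pow_finrank_mul volume x hr'2
    rw [finrank_euclideanSpace_fin] at hball
    have hB : 0 < volume.real (ball x r) :=
      ENNReal.toReal_pos (measure_ball_pos volume x hr).ne' measure_ball_lt_top.ne
    rw [measureReal_pCyl (hr.trans_le hrr').le, measureReal_pCyl hr.le, hτ',
      div_le_iff₀ (by positivity)]
    calc 2 * r ^ (2 / α) * volume.real (ball x r')
        ≤ 2 * r ^ (2 / α) * (2 ^ d * volume.real (ball x r)) := by gcongr
      _ = 2 ^ (d + 1) * (r ^ (2 / α) * volume.real (ball x r)) := by ring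
  have hstep : ∀ s, pCyl d α r s x ⊆ pCyl d α r' t x →
      |cylAvg d α a r s x - cylAvg d α a r' t x| ≤ 2 ^ (d + 1) * γ := fun s hs =>
    (abs_cylAvg_sub_cylAvg_le_of_subset ha hosc hr (hr.trans_le hrr') hrR hs).trans
      (mul_le_mul_of_nonneg_right (hratio s) hγ)
  have hτ : 0 ≤ r ^ (2 / α) := rpow_nonneg hr.le _
  have hprev := hstep (t - r ^ (2 / α)) (pCyl_subset_pCyl x hrr' (by linarith) (by linarith))
  have hcur := hstep t (pCyl_subset_pCyl x hrr' le_rfl (by linarith))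
  calc |cylAvg d α a r (t - r ^ (2 / α)) x - cylAvg d α a r t x|
      ≤ |cylAvg d α a r (t - r ^ (2 / α)) x - cylAvg d α a r' t x|
        + |cylAvg d α a r' t x - cylAvg d α a r t x| := abs_sub_le _ _ _
    _ ≤ 2 ^ (d + 2) * γ := by rw [abs_sub_comm] at hcur; rw [pow_succ]; linarith

theorem abs_cylAvg_sub_cylAvg_shift_le (ha : LocallyIntegrable a volume)
    (hosc : HasSmallMeanOsc d α γ R a) (hγ : 0 ≤ γ) (hα : α ∈ Ioc 0 2) {r : ℝ} (hr : 0 < r)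
    (hrR : 2 ^ (α / 2) * r ≤ R) (t : ℝ) (x : Esp d) (k : ℕ) :
    |cylAvg d α a r (t - k * r ^ (2 / α)) x - cylAvg d α a r t x| ≤ k * (2 ^ (d + 2) * γ) := by
  have hchain := dist_le_range_sum_of_dist_le
    (f := fun k : ℕ => cylAvg d α a r (t - k * r ^ (2 / α)) x) (d := fun _ => 2 ^ (d + 2) * γ) k
    fun {i} _ => by
      rw [Real.dist_eq, abs_sub_comm, Nat.cast_succ, add_mul, one_mul, ← sub_sub]
      exact abs_cylAvg_sub_cylAvg_prev_le ha hosc hγ hα hr hrR _ x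
  rw [Real.dist_eq, abs_sub_comm] at hchain
  simpa using hchain

theorem setIntegral_abs_sub_cylAvg_le (ha : LocallyIntegrable a volume)
    (hosc : HasSmallMeanOsc d α γ R a) (hγ : 0 ≤ γ) (hα : α ∈ Ioc 0 2) {r : ℝ} (hr : 0 < r)
    (hrR : 2 ^ (α / 2) * r ≤ R) (t : ℝ) (x : Esp d) (k : ℕ) :
    ∫ z in pCyl d α r (t - k * r ^ (2 / α)) x, |a z - cylAvg d α a r t x|
      ≤ r ^ (2 / α) * volume.real (ball x r) * ((1 + k * 2 ^ (d + 2)) * γ) := by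
  set Q := pCyl d α r (t - k * r ^ (2 / α)) x
  have hQ : volume Q ≠ ∞ := (isBounded_pCyl _ _ x).measure_lt_top.ne
  have hosc_Q :
      ∫ z in Q, |a z - cylAvg d α a r (t - k * r ^ (2 / α)) x| ≤ volume.real Q * γ := by
    rw [← measure_smul_setAverage _ hQ, smul_eq_mul]
    exact mul_le_mul_of_nonneg_left (hosc _ x r hr ((le_two_rpow_mul hα.1.le hr.le).trans hrR))
      measureReal_nonneg
  calc ∫ z in Q, |a z - cylAvg d α a r t x|
      ≤ (∫ z in Q, |a z - cylAvg d α a r (t - k * r ^ (2 / α)) x|) + volume.real Q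
          * |cylAvg d α a r (t - k * r ^ (2 / α)) x - cylAvg d α a r t x| :=
        setIntegral_abs_sub_le_add hQ (ha.integrableOn_of_isBounded (isBounded_pCyl _ _ x)) _ _
    _ ≤ volume.real Q * γ + volume.real Q * (k * (2 ^ (d + 2) * γ)) := by
        gcongr
        exact abs_cylAvg_sub_cylAvg_shift_le ha hosc hγ hα hr hrR t x k
    _ = r ^ (2 / α) * volume.real (ball x r) * ((1 + k * 2 ^ (d + 2)) * γ) := by
        rw [measureReal_pCyl hr.le]
        ring

theorem setAverage_abs_sub_cylAvg_le (ha : LocallyIntegrable a volume)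
    (hosc : HasSmallMeanOsc d α γ R a) (hγ : 0 ≤ γ) (hα : α ∈ Ioc 0 2) {r h : ℝ} (hr : 0 < r)
    (hrR : 2 ^ (α / 2) * r ≤ R) (hrh : r ^ (2 / α) ≤ h)
    (t : ℝ) (x : Esp d) :
    ⨍ z in Ioo (t - h) t ×ˢ ball x r, |a z - cylAvg d α a r t x|
      ≤ (2 + 2 ^ (d + 4)) * h * r ^ (-(2 / α)) * γ := by
  set τ := r ^ (2 / α)
  set C : ℝ := 2 ^ (d + 2)
  set vB := volume.real (ball x r)
  have hτ : 0 < τ := rpow_pos_of_pos hr _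
  have hh : 0 < h := hτ.trans_le hrh
  have hB : 0 < vB := ENNReal.toReal_pos (measure_ball_pos volume x hr).ne' measure_ball_lt_top.ne
  have hq : 1 ≤ h / τ := (one_le_div hτ).2 hrh
  set n := ⌈h / τ⌉₊
  have hn : h ≤ n * τ := (div_le_iff₀ hτ).1 (Nat.le_ceil _)
  have hn2 : (n : ℝ) ≤ 2 * (h / τ) := Nat.ceil_le_two_mul (by linarith)
  have hint : ∫ z in Ioo (t - h) t ×ˢ ball x r, |a z - cylAvg d α a r t x|
      ≤ n * (τ * vB * ((1 + n * C) * γ)) := by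
    calc _ ≤ ∑ k ∈ Finset.range n,
            ∫ z in Ioo (t - k * τ - τ) (t - k * τ) ×ˢ ball x r, |a z - cylAvg d α a r t x| :=
          setIntegral_Ioo_prod_le_sum (fun z => abs_nonneg _) measurableSet_ball
            (fun u v => (LocallyIntegrable.integrableOn_of_isBounded
              (ha.sub (locallyIntegrable_const _)) ((isBounded_Ioc u v).prod isBounded_ball)).abs)
            hτ hn
      _ ≤ ∑ k ∈ Finset.range n, τ * vB * ((1 + n * C) * γ) := by
          refine Finset.sum_le_sum fun k hk => ?_
          have hkn : (k : ℝ) ≤ n := by exact_mod_cast (Finset.mem_range.1 hk).le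
          refine (setIntegral_abs_sub_cylAvg_le ha hosc hγ hα hr hrR t x k).trans ?_
          gcongr
      _ = n * (τ * vB * ((1 + n * C) * γ)) := by
          rw [Finset.sum_const, Finset.card_range, nsmul_eq_mul]
  rw [setAverage_eq, smul_eq_mul, measureReal_Ioo_prod_ball (by linarith), sub_sub_cancel,
    rpow_neg hr.le]
  calc (h * vB)⁻¹ * ∫ z in Ioo (t - h) t ×ˢ ball x r, |a z - cylAvg d α a r t x|
      ≤ (h * vB)⁻¹ * (n * (τ * vB * ((1 + n * C) * γ))) := by gcongr
    _ = n / (h / τ) * (1 + n * C) * γ := by field_simp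
    _ ≤ 2 * (1 + 2 * (h / τ) * C) * γ := by
        gcongr
        exact (div_le_iff₀ (by linarith)).2 (by linarith)
    _ ≤ 2 * (h / τ + 2 * (h / τ) * C) * γ := by gcongr
    _ = (2 + 2 ^ (d + 4)) * h * τ⁻¹ * γ := by
        simp only [C]
        ring

end SmallMeanOsc

theorem stmt7_general (d : ℕ) (α : ℝ) (hα : α ∈ Set.Ioo (1 : ℝ) 2) :
    ∃ N : ℝ, 0 < N ∧
      ∀ (γ₀ R₀ : ℝ), 0 < γ₀ → R₀ ∈ Set.Ioc (0 : ℝ) 1 →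
        ∀ a : ℝ × Esp d → ℝ, LocallyIntegrable a volume →
          (∀ (t₀ : ℝ) (x₀ : Esp d) (ρ : ℝ), 0 < ρ → ρ ≤ R₀ →
            ⨍ z in pCyl d α ρ t₀ x₀,
              |a z - ⨍ z' in pCyl d α ρ t₀ x₀, a z'| ≤ γ₀) →
          ∀ (t₀ : ℝ) (x₀ : Esp d) (r h : ℝ), 0 < r → r ≤ (2 : ℝ) ^ (-(α / 2)) * R₀ →
            r ^ (2 / α) ≤ h →
            ⨍ z in Set.Ioo (t₀ - h) t₀ ×ˢ Metric.ball x₀ r,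
                |a z - ⨍ z' in pCyl d α r t₀ x₀, a z'|
              ≤ N * h * r ^ (-(2 / α)) * γ₀ := by
  refine ⟨2 + 2 ^ (d + 4), by positivity, ?_⟩
  intro γ₀ R₀ hγ₀ _ a ha hosc t₀ x₀ r h hr hrR hrh
  have hrR' : 2 ^ (α / 2) * r ≤ R₀ :=
    calc 2 ^ (α / 2) * r ≤ 2 ^ (α / 2) * (2 ^ (-(α / 2)) * R₀) := by gcongr
      _ = R₀ := by rw [← mul_assoc, ← rpow_add two_pos, add_neg_cancel, rpow_zero, one_mul]
  exact setAverage_abs_sub_cylAvg_le ha hosc hγ₀.le ⟨by linarith [hα.1], hα.2.le⟩ hr hrR' hrh t₀ x₀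

/-- Control of the mean oscillation over time-elongated cylinders
for a locally integrable function with small mean oscillation over parabolic
cylinders. -/
theorem stmt7 (d : ℕ) (hd : 0 < d) (α : ℝ) (hα : α ∈ Set.Ioo (1 : ℝ) 2) :
    ∃ N : ℝ, 0 < N ∧
      ∀ (γ₀ R₀ : ℝ), 0 < γ₀ → R₀ ∈ Set.Ioc (0 : ℝ) 1 →
        ∀ a : ℝ × Esp d → ℝ, LocallyIntegrable a volume →
          (∀ (t₀ : ℝ) (x₀ : Esp d) (ρ : ℝ), 0 < ρ → ρ ≤ R₀ →
            ⨍ z in pCyl d α ρ t₀ x₀,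
              |a z - ⨍ z' in pCyl d α ρ t₀ x₀, a z'| ≤ γ₀) →
          ∀ (t₀ : ℝ) (x₀ : Esp d) (r h : ℝ), 0 < r → r ≤ (2 : ℝ) ^ (-(α / 2)) * R₀ →
            r ^ (2 / α) ≤ h →
            ⨍ z in Set.Ioo (t₀ - h) t₀ ×ˢ Metric.ball x₀ r,
                |a z - ⨍ z' in pCyl d α r t₀ x₀, a z'|
              ≤ N * h * r ^ (-(2 / α)) * γ₀ :=
  stmt7_general d α hα
end
end

section
/- There is an absolute constant N > 0 such that for every p ∈ [1,∞), every T > 0, every ε > 0, and every u ∈ C²([0,∞)) with u(0) = 0 and u′(0) = 0, one has ‖u′‖_{L_p(0,T)} ≤ N·ε^{−1}·‖u‖_{L_p(0,T)} + ε·‖u″‖_{L_p(0,T)}. In particular, N does not depend on u, p, ε, or T. -/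
open MeasureTheory Set
open scoped ENNReal Topology

/-!
For `t ≤ ε`, `u'(0) = 0` gives `|u'(t)| ≤ ∫₀ᵗ |u''|`. For `t > ε`, the mean value theorem on
`[t - ε, t]` gives `ξ` with `u'(ξ) = (u t - u (t - ε)) / ε`, whence
`|u'(t)| ≤ ε⁻¹ |u t - u (t - ε)| + ∫_{t-ε}^t |u''|`. After extending `u` and `u''` by zero outside
`(0, T)`, the difference quotient has `L_p` norm at most `2 ε⁻¹ ‖u‖_p` by translation invariance,
and the moving integral `t ↦ ∫_{t-ε}^t |u''|` has `L_p` norm at most `ε ‖u''‖_p` by Hölder's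
inequality on each window followed by Tonelli. So `N = 2` works.
-/

theorem rpow_lintegral_le_measure_univ_rpow_mul {α : Type*} [MeasurableSpace α] {μ : Measure α}
    {f : α → ℝ≥0∞} (hf : AEMeasurable f μ) {q : ℝ} (hq : 1 ≤ q) :
    (∫⁻ a, f a ∂μ) ^ q ≤ μ univ ^ (q - 1) * ∫⁻ a, f a ^ q ∂μ := by
  have h := eLpNorm'_le_eLpNorm'_mul_rpow_measure_univ one_pos hq hf.aestronglyMeasurable
  simp only [eLpNorm', enorm_eq_self, ENNReal.rpow_one, div_one] at h
  have hq0 : q ≠ 0 := by positivity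
  calc (∫⁻ a, f a ∂μ) ^ q
      ≤ ((∫⁻ a, f a ^ q ∂μ) ^ (1 / q) * μ univ ^ (1 - 1 / q)) ^ q := by gcongr
    _ = μ univ ^ (q - 1) * ∫⁻ a, f a ^ q ∂μ := by
      rw [ENNReal.mul_rpow_of_nonneg _ _ (by positivity), ← ENNReal.rpow_mul, ← ENNReal.rpow_mul,
        one_div_mul_cancel hq0, ENNReal.rpow_one, sub_mul, one_div_mul_cancel hq0, one_mul,
        mul_comm]

theorem setLIntegral_Ioo_sub_eq (f : ℝ → ℝ≥0∞) (ε t : ℝ) :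
    ∫⁻ s in Ioo (t - ε) t, f s = ∫⁻ s, (Ioo 0 ε).indicator 1 (t - s) * f s := by
  rw [← lintegral_indicator measurableSet_Ioo]
  congr 1 with s
  by_cases hs : s ∈ Ioo (t - ε) t
  · have : t - s ∈ Ioo 0 ε := ⟨by linarith [hs.2], by linarith [hs.1]⟩
    simp [hs, this]
  · have : t - s ∉ Ioo 0 ε := fun h => hs ⟨by linarith [h.2], by linarith [h.1]⟩
    simp [hs, this]

theorem measurable_setLIntegral_Ioo_sub {f : ℝ → ℝ≥0∞} (hf : Measurable f) (ε : ℝ) :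
    Measurable fun t => ∫⁻ s in Ioo (t - ε) t, f s := by
  simp_rw [setLIntegral_Ioo_sub_eq]
  exact Measurable.lintegral_prod_right' (ν := volume)
    (((measurable_const.indicator measurableSet_Ioo).comp (measurable_fst.sub measurable_snd)).mul
      (hf.comp measurable_snd))

theorem lintegral_setLIntegral_Ioo_sub {f : ℝ → ℝ≥0∞} (hf : Measurable f) (ε : ℝ) :
    ∫⁻ t, ∫⁻ s in Ioo (t - ε) t, f s = ENNReal.ofReal ε * ∫⁻ s, f s := by
  have hind : Measurable ((Ioo (0 : ℝ) ε).indicator (1 : ℝ → ℝ≥0∞)) :=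
    measurable_const.indicator measurableSet_Ioo
  simp_rw [setLIntegral_Ioo_sub_eq]
  rw [lintegral_lintegral_swap ((hind.comp (measurable_fst.sub measurable_snd)).mul
    (hf.comp measurable_snd)).aemeasurable]
  have hwin : ∀ s : ℝ, ∫⁻ t, (Ioo 0 ε).indicator 1 (t - s) * f s = f s * ENNReal.ofReal ε := by
    intro s
    rw [lintegral_mul_const (f := fun t => (Ioo 0 ε).indicator 1 (t - s)) _
        (hind.comp (measurable_sub_const s)),
      lintegral_sub_right_eq_self ((Ioo (0 : ℝ) ε).indicator 1) s,
      lintegral_indicator_one measurableSet_Ioo, Real.volume_Ioo, sub_zero, mul_comm]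
  simp_rw [hwin]
  rw [lintegral_mul_const _ hf, mul_comm]

theorem lintegral_rpow_setLIntegral_Ioo_sub_le {f : ℝ → ℝ≥0∞} (hf : Measurable f) {q : ℝ}
    (hq : 1 ≤ q) (ε : ℝ) :
    ∫⁻ t, (∫⁻ s in Ioo (t - ε) t, f s) ^ q ≤ ENNReal.ofReal ε ^ q * ∫⁻ s, f s ^ q := by
  calc ∫⁻ t, (∫⁻ s in Ioo (t - ε) t, f s) ^ q
      ≤ ∫⁻ t, ENNReal.ofReal ε ^ (q - 1) * ∫⁻ s in Ioo (t - ε) t, f s ^ q := by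
        refine lintegral_mono fun t => ?_
        simpa [Real.volume_Ioo] using
          rpow_lintegral_le_measure_univ_rpow_mul (μ := volume.restrict (Ioo (t - ε) t))
            hf.aemeasurable hq
    _ = ENNReal.ofReal ε ^ (q - 1) * (ENNReal.ofReal ε * ∫⁻ s, f s ^ q) := by
        rw [lintegral_const_mul' _ _
            (ENNReal.rpow_ne_top_of_nonneg (by linarith) ENNReal.ofReal_ne_top),
          lintegral_setLIntegral_Ioo_sub (hf.pow_const q)]
    _ = ENNReal.ofReal ε ^ q * ∫⁻ s, f s ^ q := by
        rw [← mul_assoc]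
        congr 1
        conv_rhs => rw [← sub_add_cancel q 1]
        rw [ENNReal.rpow_add_of_nonneg _ _ (by linarith) zero_le_one, ENNReal.rpow_one]

theorem eLpNorm_setLIntegral_Ioo_sub_le {f : ℝ → ℝ≥0∞} (hf : Measurable f) {p : ℝ≥0∞}
    (hp : 1 ≤ p) (hp_top : p ≠ ∞) (ε : ℝ) :
    eLpNorm (fun t => ∫⁻ s in Ioo (t - ε) t, f s) p volume ≤
      ENNReal.ofReal ε * eLpNorm f p volume := by
  have hq : 1 ≤ p.toReal := by simpa using ENNReal.toReal_mono hp_top hp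
  simp only [eLpNorm_eq_lintegral_rpow_enorm_toReal (zero_lt_one.trans_le hp).ne' hp_top,
    enorm_eq_self]
  calc (∫⁻ t, (∫⁻ s in Ioo (t - ε) t, f s) ^ p.toReal) ^ (1 / p.toReal)
      ≤ (ENNReal.ofReal ε ^ p.toReal * ∫⁻ s, f s ^ p.toReal) ^ (1 / p.toReal) := by
        gcongr
        exact lintegral_rpow_setLIntegral_Ioo_sub_le hf hq ε
    _ = ENNReal.ofReal ε * (∫⁻ s, f s ^ p.toReal) ^ (1 / p.toReal) := by
        rw [ENNReal.mul_rpow_of_nonneg _ _ (by positivity), ← ENNReal.rpow_mul,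
          mul_one_div_cancel (by positivity), ENNReal.rpow_one]

theorem eLpNorm_sub_comp_sub_le {E : Type*} [NormedAddCommGroup E] {f : ℝ → E}
    (hf : AEStronglyMeasurable f volume) {p : ℝ≥0∞} (hp : 1 ≤ p) (h : ℝ) :
    eLpNorm (fun t => f t - f (t - h)) p volume ≤ 2 * eLpNorm f p volume := by
  have hshift := measurePreserving_sub_right volume h
  calc eLpNorm (fun t => f t - f (t - h)) p volume
      ≤ eLpNorm f p volume + eLpNorm (f ∘ fun t => t - h) p volume :=
        eLpNorm_sub_le hf (hf.comp_measurePreserving hshift) hp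
    _ = 2 * eLpNorm f p volume := by
        rw [eLpNorm_comp_measurePreserving hf hshift, two_mul]

section SecondOrder

variable {u : ℝ → ℝ}

theorem derivWithin_Ici_eq_deriv {x : ℝ} (hx : 0 < x) :
    derivWithin u (Ici 0) x = deriv u x :=
  derivWithin_of_mem_nhds (Ici_mem_nhds hx)

theorem enorm_derivWithin_Ici_sub_le (hu : ContDiffOn ℝ 2 u (Ici 0)) {a b : ℝ} (ha : 0 ≤ a)
    (hab : a ≤ b) :
    ‖derivWithin u (Ici 0) b - derivWithin u (Ici 0) a‖ₑ ≤
      ∫⁻ s in Ioo a b, ‖deriv (deriv u) s‖ₑ := by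
  have hv : ContDiffOn ℝ 1 (derivWithin u (Ici 0)) (Icc a b) :=
    (hu.derivWithin (uniqueDiffOn_Ici 0) (by norm_num)).mono fun x hx => ha.trans hx.1
  refine (enorm_sub_le_lintegral_deriv_of_contDiffOn_Icc hv hab).trans_eq ?_
  rw [← restrict_Ioo_eq_restrict_Icc]
  refine setLIntegral_congr_fun measurableSet_Ioo fun s hs => ?_
  have hv_eq : derivWithin u (Ici 0) =ᶠ[𝓝 s] deriv u := by
    filter_upwards [Ioi_mem_nhds (ha.trans_lt hs.1)] with y hy
    exact derivWithin_Ici_eq_deriv hy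
  rw [hv_eq.deriv_eq]

theorem enorm_deriv_le_enorm_slope_add_lintegral (hu : ContDiffOn ℝ 2 u (Ici 0))
    (hu0 : derivWithin u (Ici 0) 0 = 0) {T ε t : ℝ} (hε : 0 < ε) (ht : t ∈ Ioo 0 T) :
    ‖deriv u t‖ₑ ≤ ‖ε⁻¹ * ((Ioo 0 T).indicator u t - (Ioo 0 T).indicator u (t - ε))‖ₑ +
      ∫⁻ s in Ioo (t - ε) t, (Ioo 0 T).indicator (fun x => ‖deriv (deriv u) x‖ₑ) s := by
  have hwindow : ∀ a, 0 ≤ a → t - ε ≤ a → a ≤ t →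
      ‖deriv u t - derivWithin u (Ici 0) a‖ₑ ≤
        ∫⁻ s in Ioo (t - ε) t, (Ioo 0 T).indicator (fun x => ‖deriv (deriv u) x‖ₑ) s := by
    intro a ha hεa hat
    rw [← derivWithin_Ici_eq_deriv ht.1]
    refine (enorm_derivWithin_Ici_sub_le hu ha hat).trans ?_
    calc ∫⁻ s in Ioo a t, ‖deriv (deriv u) s‖ₑ
        = ∫⁻ s in Ioo a t, (Ioo 0 T).indicator (fun x => ‖deriv (deriv u) x‖ₑ) s :=
          setLIntegral_congr_fun measurableSet_Ioo fun s hs =>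
            (indicator_of_mem (show s ∈ Ioo 0 T from ⟨ha.trans_lt hs.1, hs.2.trans ht.2⟩)
              (fun x => ‖deriv (deriv u) x‖ₑ)).symm
      _ ≤ _ := lintegral_mono_set (Ioo_subset_Ioo_left hεa)
  rcases le_or_gt t ε with htε | hεt
  · have h := hwindow 0 le_rfl (by linarith) ht.1.le
    rw [hu0, sub_zero] at h
    exact h.trans le_add_self
  · have hdiff : DifferentiableOn ℝ u (Ici 0) := hu.differentiableOn (by norm_num)
    obtain ⟨ξ, hξ, hslope⟩ := exists_deriv_eq_slope u (sub_lt_self t hε)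
      (hdiff.continuousOn.mono fun x hx => mem_Ici.2 (by linarith [hx.1]))
      (hdiff.mono fun x hx => mem_Ici.2 (by linarith [hx.1]))
    have hξ0 : 0 < ξ := by linarith [hξ.1]
    rw [sub_sub_cancel] at hslope
    have htε : t - ε ∈ Ioo 0 T := ⟨by linarith, by linarith [ht.2]⟩
    rw [indicator_of_mem ht, indicator_of_mem htε, inv_mul_eq_div, ← hslope,
      ← derivWithin_Ici_eq_deriv hξ0]
    calc ‖deriv u t‖ₑ
        ≤ ‖derivWithin u (Ici 0) ξ‖ₑ + ‖deriv u t - derivWithin u (Ici 0) ξ‖ₑ := by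
          simpa using
            enorm_add_le (derivWithin u (Ici 0) ξ) (deriv u t - derivWithin u (Ici 0) ξ)
      _ ≤ _ := by gcongr; exact hwindow ξ hξ0.le hξ.1.le hξ.2.le

theorem eLpNorm_deriv_restrict_Ioo_le (hu : ContDiffOn ℝ 2 u (Ici 0))
    (hu0 : derivWithin u (Ici 0) 0 = 0) {p : ℝ≥0∞} (hp : 1 ≤ p) (hp_top : p ≠ ∞) {T ε : ℝ}
    (hε : 0 < ε) :
    eLpNorm (deriv u) p (volume.restrict (Ioo 0 T)) ≤
      ENNReal.ofReal (2 * ε⁻¹) * eLpNorm u p (volume.restrict (Ioo 0 T)) +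
        ENNReal.ofReal ε * eLpNorm (deriv (deriv u)) p (volume.restrict (Ioo 0 T)) := by
  set U := (Ioo 0 T).indicator u
  set W := (Ioo 0 T).indicator fun x => ‖deriv (deriv u) x‖ₑ
  have hU : AEStronglyMeasurable U volume :=
    (aestronglyMeasurable_indicator_iff measurableSet_Ioo).2
      ((hu.continuousOn.mono fun x hx => mem_Ici.2 hx.1.le).aestronglyMeasurable measurableSet_Ioo)
  have hW : Measurable W := (measurable_deriv _).enorm.indicator measurableSet_Ioo
  have hslope : AEStronglyMeasurable (fun t => ε⁻¹ * (U t - U (t - ε))) volume :=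
    (hU.sub (hU.comp_measurePreserving (measurePreserving_sub_right volume ε))).const_mul _
  calc eLpNorm (deriv u) p (volume.restrict (Ioo 0 T))
      ≤ eLpNorm (fun t => ‖ε⁻¹ * (U t - U (t - ε))‖ₑ + ∫⁻ s in Ioo (t - ε) t, W s) p volume :=
        (eLpNorm_mono_enorm_ae ((ae_restrict_iff' measurableSet_Ioo).2 (.of_forall fun t ht =>
          (enorm_deriv_le_enorm_slope_add_lintegral hu hu0 hε ht).trans_eq
            (enorm_eq_self _).symm))).trans (eLpNorm_mono_measure _ Measure.restrict_le_self)
    _ ≤ eLpNorm (fun t => ε⁻¹ * (U t - U (t - ε))) p volume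
          + eLpNorm (fun t => ∫⁻ s in Ioo (t - ε) t, W s) p volume := by
        rw [← eLpNorm_enorm (fun t => ε⁻¹ * (U t - U (t - ε)))]
        exact eLpNorm_add_le (f := fun t => ‖ε⁻¹ * (U t - U (t - ε))‖ₑ)
          (g := fun t => ∫⁻ s in Ioo (t - ε) t, W s) hslope.enorm.aestronglyMeasurable
          (measurable_setLIntegral_Ioo_sub hW ε).aestronglyMeasurable hp
    _ ≤ ENNReal.ofReal ε⁻¹ * (2 * eLpNorm U p volume) + ENNReal.ofReal ε * eLpNorm W p volume := by
        gcongr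
        · rw [show (fun t => ε⁻¹ * (U t - U (t - ε))) = ε⁻¹ • fun t => U t - U (t - ε) from rfl,
            eLpNorm_const_smul, Real.enorm_of_nonneg (inv_nonneg.2 hε.le)]
          gcongr
          exact eLpNorm_sub_comp_sub_le hU hp ε
        · exact eLpNorm_setLIntegral_Ioo_sub_le hW hp hp_top ε
    _ = _ := by
        rw [eLpNorm_indicator_eq_eLpNorm_restrict measurableSet_Ioo,
          eLpNorm_indicator_eq_eLpNorm_restrict measurableSet_Ioo, eLpNorm_enorm,
          ENNReal.ofReal_mul zero_le_two, ENNReal.ofReal_ofNat, mul_left_comm, mul_assoc]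

end SecondOrder

/-- Interpolation inequality `‖u′‖_{L_p(0,T)} ≤ N ε⁻¹ ‖u‖_{L_p(0,T)}
 + ε ‖u″‖_{L_p(0,T)}` for `u ∈ C²([0,∞))` with `u(0) = u′(0) = 0`, with an absolute
constant `N` independent of `u`, `p`, `ε`, and `T`. -/
theorem stmt19 :
    ∃ N : ℝ, 0 < N ∧
      ∀ (p T ε : ℝ), 1 ≤ p → 0 < T → 0 < ε →
        ∀ u : ℝ → ℝ, ContDiffOn ℝ 2 u (Set.Ici 0) →
          u 0 = 0 → derivWithin u (Set.Ici 0) 0 = 0 →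
          eLpNorm (deriv u) (ENNReal.ofReal p) (volume.restrict (Set.Ioo (0 : ℝ) T))
            ≤ ENNReal.ofReal (N * ε⁻¹) *
                eLpNorm u (ENNReal.ofReal p) (volume.restrict (Set.Ioo (0 : ℝ) T))
              + ENNReal.ofReal ε *
                eLpNorm (deriv (deriv u)) (ENNReal.ofReal p)
                  (volume.restrict (Set.Ioo (0 : ℝ) T)) :=
  ⟨2, two_pos, fun _ _ _ hp _ hε _ hu _ hu0 =>
    eLpNorm_deriv_restrict_Ioo_le hu hu0 (ENNReal.one_le_ofReal.2 hp) ENNReal.ofReal_ne_top hε⟩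
end
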